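/- If X is a finite connected graph, then the smallest nonzero eigenvalue λ₁ of the zeroth Laplace operator Δ₀ = c₁ ∘ c₁* satisfies λ₁ ≥ 1/(diam(X)·vol(X)). -/

import Mathlib

/-!
Let `f` be an eigenvector of `Δ₀ = c₁ c₁*` for `μ ≠ 0`. Then `μ ‖f‖² = ‖c₁* f‖²`, and `f` is
orthogonal to the constant functions (they lie in `ker c₁*`), i.e. `∑ f = 0`. So if `f(u)²` is
maximal there is a vertex `w` with `f(u) f(w) ≤ 0`, whence `f(u)² ≤ (f(u) - f(w))²`. Telescoping
along a shortest path from `u` to `w` and Cauchy–Schwarz bound this by `diam · ‖c₁* f‖²`, since a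
path uses every edge at most once. Finally `‖f‖² ≤ |V| f(u)² ≤ vol · f(u)²`, as
every vertex of a connected graph with two vertices has positive degree.
-/

open scoped RealInnerProductSpace

variable {V E : Type*}

noncomputable def c1 [Fintype E] [DecidableEq V] (v0 v1 : E → V) :
    EuclideanSpace ℝ E →ₗ[ℝ] EuclideanSpace ℝ V where
  toFun a := WithLp.toLp 2 fun v =>
    (∑ e ∈ Finset.univ.filter (fun e => v1 e = v), a e)
      - (∑ e ∈ Finset.univ.filter (fun e => v0 e = v), a e)
  map_add' a b := by
    ext v
    simp [PiLp.add_apply, Finset.sum_add_distrib]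
    ring
  map_smul' c a := by
    ext v
    simp [PiLp.smul_apply, smul_eq_mul, ← Finset.mul_sum, mul_sub]

/-- Spectral density function of a linear map of inner product spaces. -/
noncomputable def sdf {V W : Type*} [NormedAddCommGroup V] [InnerProductSpace ℝ V]
    [NormedAddCommGroup W] [InnerProductSpace ℝ W]
    (f : V →ₗ[ℝ] W) (lam : ℝ) : ℕ :=
  sSup {n : ℕ | ∃ U : Submodule ℝ V, Module.finrank ℝ U = n ∧ ∀ v ∈ U, ‖f v‖ ≤ lam * ‖v‖}

/-- Degree of a vertex in a finite directed multigraph (loops count twice). -/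
def vdeg [Fintype E] [DecidableEq V] (v0 v1 : E → V) (v : V) : ℕ :=
  (Finset.univ.filter fun e => v0 e = v).card + (Finset.univ.filter fun e => v1 e = v).card

/-- Maximal vertex degree of a finite multigraph. -/
def maxDeg [Fintype V] [Fintype E] [DecidableEq V] (v0 v1 : E → V) : ℕ :=
  Finset.univ.sup (vdeg v0 v1)

/-- The simple graph underlying a directed multigraph. -/
def supportGraph (v0 v1 : E → V) : SimpleGraph V where
  Adj u w := u ≠ w ∧ ∃ e, (v0 e = u ∧ v1 e = w) ∨ (v0 e = w ∧ v1 e = u)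
  symm := by
    constructor
    rintro u w ⟨h, e, he⟩
    exact ⟨h.symm, e, he.symm⟩
  loopless := by constructor; rintro u ⟨h, _⟩; exact h rfl

section SelfCompAdjoint

variable {F G : Type*} [NormedAddCommGroup F] [InnerProductSpace ℝ F] [FiniteDimensional ℝ F]
  [NormedAddCommGroup G] [InnerProductSpace ℝ G] [FiniteDimensional ℝ G] {T : F →ₗ[ℝ] G}
  {mu : ℝ} {x : G}

theorem Module.End.HasEigenvector.mul_norm_sq_eq_norm_adjoint_sq
    (hx : Module.End.HasEigenvector (T ∘ₗ LinearMap.adjoint T) mu x) :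
    mu * ‖x‖ ^ 2 = ‖LinearMap.adjoint T x‖ ^ 2 := by
  have h := inner_product_apply_eigenvector hx.apply_eq_smul
  rw [LinearMap.comp_apply, ← LinearMap.adjoint_inner_left, real_inner_self_eq_norm_sq] at h
  exact h.symm

theorem Module.End.HasEigenvector.inner_eq_zero_of_adjoint_apply_eq_zero
    (hx : Module.End.HasEigenvector (T ∘ₗ LinearMap.adjoint T) mu x) (hmu : mu ≠ 0) {y : G}
    (hy : LinearMap.adjoint T y = 0) : ⟪x, y⟫ = 0 := by
  have h : mu * ⟪x, y⟫ = 0 := by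
    rw [← real_inner_smul_left, ← hx.apply_eq_smul, LinearMap.comp_apply,
      ← LinearMap.adjoint_inner_right, hy, inner_zero_right]
  exact (mul_eq_zero.mp h).resolve_left hmu

end SelfCompAdjoint

theorem Finset.sum_fiberwise_sum_mul {ι κ R : Type*} [Fintype κ] [DecidableEq κ]
    [NonUnitalNonAssocSemiring R] (s : Finset ι) (w : ι → κ) (a : ι → R) (g : κ → R) :
    ∑ j, (∑ i ∈ s with w i = j, a i) * g j = ∑ i ∈ s, a i * g (w i) := by
  simp_rw [Finset.sum_mul]
  rw [← Finset.sum_fiberwise s w fun i => a i * g (w i)]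
  refine Finset.sum_congr rfl fun j _ => Finset.sum_congr rfl fun i hi => ?_
  rw [(Finset.mem_filter.mp hi).2]

theorem exists_sq_le_sq_sub_of_sum_eq_zero {ι : Type*} [Fintype ι] {f : ι → ℝ}
    (hf : ∑ j, f j = 0) (i : ι) : ∃ j, f i ^ 2 ≤ (f i - f j) ^ 2 := by
  obtain ⟨j, hj⟩ : ∃ j, f i * f j ≤ 0 := by
    by_contra! h
    have hpos := Finset.sum_pos (fun j _ => h j) ⟨i, Finset.mem_univ i⟩
    rw [← Finset.mul_sum, hf, mul_zero] at hpos
    exact hpos.false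
  exact ⟨j, by nlinarith [sq_nonneg (f j)]⟩

theorem SimpleGraph.Walk.sq_sub_le_length_mul_sum_sq {G : SimpleGraph V} {u w : V}
    (p : G.Walk u w) (f : V → ℝ) :
    (f u - f w) ^ 2 ≤
      p.length * ∑ i : Fin p.length, (f (p.getVert i) - f (p.getVert (i + 1))) ^ 2 := by
  have htelescope :
      f u - f w = ∑ i : Fin p.length, (f (p.getVert i) - f (p.getVert (i + 1))) := by
    rw [Fin.sum_univ_eq_sum_range (fun i => f (p.getVert i) - f (p.getVert (i + 1))),
      Finset.sum_range_sub', p.getVert_zero, p.getVert_length]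
  rw [htelescope]
  simpa using sq_sum_le_card_mul_sum_sq (s := Finset.univ)
    (f := fun i : Fin p.length => f (p.getVert i) - f (p.getVert (i + 1)))

section Coboundary

variable (v0 v1 : E → V)

noncomputable def d1 : EuclideanSpace ℝ V →ₗ[ℝ] EuclideanSpace ℝ E where
  toFun g := WithLp.toLp 2 fun e => g (v1 e) - g (v0 e)
  map_add' g h := by ext e; simp only [PiLp.add_apply]; ring
  map_smul' c g := by ext e; simp only [PiLp.smul_apply, smul_eq_mul, RingHom.id_apply]; ring

@[simp]
theorem d1_apply (g : EuclideanSpace ℝ V) (e : E) : d1 v0 v1 g e = g (v1 e) - g (v0 e) := rfl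

theorem adjoint_c1 [Fintype V] [Fintype E] [DecidableEq V] :
    LinearMap.adjoint (c1 v0 v1) = d1 v0 v1 := by
  refine ((LinearMap.eq_adjoint_iff _ _).mpr fun g a => ?_).symm
  simp only [PiLp.inner_apply, RCLike.inner_apply, conj_trivial, d1_apply, c1, LinearMap.coe_mk,
    AddHom.coe_mk]
  simp_rw [mul_sub, sub_mul, Finset.sum_sub_distrib, Finset.sum_fiberwise_sum_mul]

theorem d1_apply_sq_of_sym2_eq (f : EuclideanSpace ℝ V) {e : E} {a b : V}
    (h : s(v0 e, v1 e) = s(a, b)) : d1 v0 v1 f e ^ 2 = (f a - f b) ^ 2 := by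
  rcases Sym2.eq_iff.mp h with ⟨h0, h1⟩ | ⟨h0, h1⟩
  · rw [d1_apply, h0, h1]; ring
  · rw [d1_apply, h0, h1]

theorem exists_sym2_eq_of_adj {a b : V} (h : (supportGraph v0 v1).Adj a b) :
    ∃ e, s(v0 e, v1 e) = s(a, b) := by
  obtain ⟨-, e, ⟨h0, h1⟩ | ⟨h0, h1⟩⟩ := h
  exacts [⟨e, by rw [h0, h1]⟩, ⟨e, by rw [h0, h1, Sym2.eq_swap]⟩]

theorem SimpleGraph.Walk.IsPath.sum_sq_sub_getVert_le_norm_d1_sq [Fintype E] {u w : V}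
    {p : (supportGraph v0 v1).Walk u w} (hp : p.IsPath) (f : EuclideanSpace ℝ V) :
    ∑ i : Fin p.length, (f (p.getVert i) - f (p.getVert (i + 1))) ^ 2 ≤ ‖d1 v0 v1 f‖ ^ 2 := by
  choose φ hφ using fun i : Fin p.length => exists_sym2_eq_of_adj v0 v1 (p.adj_getVert_succ i.2)
  have hinj : Function.Injective φ := fun i j hij => by
    have h := (hφ i).symm.trans ((congrArg (fun e => s(v0 e, v1 e)) hij).trans (hφ j))
    rw [← p.getElem_edges (by simp), ← p.getElem_edges (by simp),
      hp.isTrail.edges_nodup.getElem_inj_iff] at h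
    exact Fin.ext h
  calc ∑ i : Fin p.length, (f (p.getVert i) - f (p.getVert (i + 1))) ^ 2
      = ∑ i, d1 v0 v1 f (φ i) ^ 2 :=
        Finset.sum_congr rfl fun i _ => (d1_apply_sq_of_sym2_eq v0 v1 f (hφ i)).symm
    _ = ∑ e ∈ Finset.univ.map ⟨φ, hinj⟩, d1 v0 v1 f e ^ 2 :=
        (Finset.sum_map Finset.univ ⟨φ, hinj⟩ fun e => d1 v0 v1 f e ^ 2).symm
    _ ≤ ∑ e, d1 v0 v1 f e ^ 2 := Finset.sum_le_univ_sum_of_nonneg fun _ => sq_nonneg _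
    _ = ‖d1 v0 v1 f‖ ^ 2 := (EuclideanSpace.real_norm_sq_eq _).symm

theorem norm_sq_le_diam_mul_card_mul_norm_d1_sq [Fintype V] [Fintype E]
    (hc : (supportGraph v0 v1).Connected) {f : EuclideanSpace ℝ V} (hf : ∑ v, f v = 0) :
    ‖f‖ ^ 2 ≤ (supportGraph v0 v1).diam * Fintype.card V * ‖d1 v0 v1 f‖ ^ 2 := by
  have := hc.nonempty
  obtain ⟨u, hu⟩ := Finite.exists_max fun v => f v ^ 2
  obtain ⟨w, hw⟩ := exists_sq_le_sq_sub_of_sum_eq_zero hf u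
  obtain ⟨p, hp⟩ := hc.exists_walk_length_eq_dist u w
  have hlen : (p.length : ℝ) ≤ (supportGraph v0 v1).diam := by
    exact_mod_cast hp ▸ SimpleGraph.dist_le_diam (SimpleGraph.connected_iff_ediam_ne_top.mp hc)
  calc ‖f‖ ^ 2 = ∑ v, f v ^ 2 := EuclideanSpace.real_norm_sq_eq f
    _ ≤ ∑ _v : V, f u ^ 2 := Finset.sum_le_sum fun v _ => hu v
    _ = Fintype.card V * f u ^ 2 := by rw [Finset.sum_const, Finset.card_univ, nsmul_eq_mul]
    _ ≤ Fintype.card V * (f u - f w) ^ 2 := by gcongr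
    _ ≤ Fintype.card V * (p.length *
          ∑ i : Fin p.length, (f (p.getVert i) - f (p.getVert (i + 1))) ^ 2) := by
        gcongr; exact p.sq_sub_le_length_mul_sum_sq f
    _ ≤ Fintype.card V * ((supportGraph v0 v1).diam * ‖d1 v0 v1 f‖ ^ 2) := by
        gcongr; exact (p.isPath_of_length_eq_dist hp).sum_sq_sub_getVert_le_norm_d1_sq v0 v1 f
    _ = (supportGraph v0 v1).diam * Fintype.card V * ‖d1 v0 v1 f‖ ^ 2 := by ring

theorem one_le_vdeg [Fintype E] [DecidableEq V] [Nontrivial V]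
    (hc : (supportGraph v0 v1).Preconnected) (v : V) : 1 ≤ vdeg v0 v1 v := by
  obtain ⟨w, -, e, ⟨he, -⟩ | ⟨-, he⟩⟩ := hc.exists_adj_of_nontrivial v
  · exact le_add_right (Finset.card_pos.mpr ⟨e, by simpa using he⟩)
  · exact le_add_left (Finset.card_pos.mpr ⟨e, by simpa using he⟩)

theorem card_le_sum_vdeg [Fintype V] [Fintype E] [DecidableEq V] [Nontrivial V]
    (hc : (supportGraph v0 v1).Preconnected) : Fintype.card V ≤ ∑ v, vdeg v0 v1 v := by
  rw [Fintype.card_eq_sum_ones]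
  exact Finset.sum_le_sum fun v _ => one_le_vdeg v0 v1 hc v

end Coboundary

/-- Estimate on the first non-trivial eigenvalue of the graph Laplacian:
every nonzero eigenvalue of Δ₀ = c₁ ∘ c₁* of a finite connected graph is at least
1/(diam(X) · vol(X)). -/
theorem eigenvalue_lower_bound {V E : Type*} [Fintype V] [Fintype E] [DecidableEq V]
    (v0 v1 : E → V) (hc : (supportGraph v0 v1).Connected) (mu : ℝ)
    (hmu : Module.End.HasEigenvalue ((c1 v0 v1) ∘ₗ LinearMap.adjoint (c1 v0 v1)) mu)
    (hne : mu ≠ 0) :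
    1 / (((supportGraph v0 v1).diam : ℝ) * (∑ v : V, vdeg v0 v1 v)) ≤ mu := by
  obtain ⟨f, hf⟩ := hmu.exists_hasEigenvector
  have hmu0 : 0 ≤ mu := eigenvalue_nonneg_of_nonneg hmu
    (LinearMap.isPositive_self_comp_adjoint _).re_inner_nonneg_right
  have hsum : ∑ v, f v = 0 := by
    have h := hf.inner_eq_zero_of_adjoint_apply_eq_zero hne (y := WithLp.toLp 2 fun _ => 1)
      (by ext; simp [adjoint_c1])
    simpa [PiLp.inner_apply] using h
  have hpoincare := norm_sq_le_diam_mul_card_mul_norm_d1_sq v0 v1 hc hsum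
  rw [← adjoint_c1, ← hf.mul_norm_sq_eq_norm_adjoint_sq] at hpoincare
  set D := (supportGraph v0 v1).diam
  rcases eq_or_ne (D * ∑ v, vdeg v0 v1 v) 0 with hzero | hpos
  · -- `1 / 0 = 0`
    rw [← Nat.cast_mul, hzero, Nat.cast_zero, div_zero]
    exact hmu0
  have : Nontrivial V := SimpleGraph.nontrivial_of_diam_ne_zero (left_ne_zero_of_mul hpos)
  have hcard : (Fintype.card V : ℝ) ≤ ∑ v, vdeg v0 v1 v := by
    exact_mod_cast card_le_sum_vdeg v0 v1 hc.preconnected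
  have hf0 : 0 < ‖f‖ ^ 2 := pow_pos (norm_pos_iff.mpr hf.2) 2
  rw [div_le_iff₀ (by exact_mod_cast Nat.pos_of_ne_zero hpos)]
  refine le_of_mul_le_mul_right ?_ hf0
  calc 1 * ‖f‖ ^ 2 ≤ D * Fintype.card V * (mu * ‖f‖ ^ 2) := by rwa [one_mul]
    _ ≤ D * (∑ v, vdeg v0 v1 v) * (mu * ‖f‖ ^ 2) := by gcongr
    _ = mu * (D * (∑ v, vdeg v0 v1 v)) * ‖f‖ ^ 2 := by ring
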